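/- Let ⟨X, Y, I⟩ be an L-context and Σ a set of FAIs that is S-complete in ⟨X, Y, I⟩. Then the following are equivalent: (1) Σ is an S-base of ⟨X, Y, I⟩; (2) Σ \ {A ⇒ B} ⊭^S A ⇒ B for all A ⇒ B ∈ Σ; (3) [A]^S_{Σ \ {A ⇒ B}} ⊊ [A]^S_Σ for all A ⇒ B ∈ Σ. -/

import Mathlib

/-- A complete residuated lattice: a complete lattice with a commutative, associative
multiplication whose neutral element is the top element and which distributes over
arbitrary suprema. -/
class CompleteResiduatedLattice (L : Type*) extends CompleteLattice L, CommMonoid L where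
  mul_sSup : ∀ (a : L) (s : Set L), a * sSup s = ⨆ b ∈ s, a * b
  one_eq_top : (1 : L) = ⊤

namespace FAIparam

variable {L : Type*} {Y : Type*} {X : Type*}

/-- A fuzzy attribute implication (FAI): a pair (antecedent, consequent) of L-sets in Y. -/
abbrev FAI (L Y : Type*) := (Y → L) × (Y → L)

/-- A pair of operators on L-sets in Y. -/
abbrev OpPair (L Y : Type*) := ((Y → L) → (Y → L)) × ((Y → L) → (Y → L))

/-- S is a parameterization: every pair in S is a monotone Galois connection, the identity
pair belongs to S, and S is closed under composition ⟨f₁,g₁⟩∘⟨f₂,g₂⟩ = ⟨f₁∘f₂, g₂∘g₁⟩. -/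
def IsParam [CompleteResiduatedLattice L] (S : Set (OpPair L Y)) : Prop :=
  (∀ p ∈ S, ∀ A B : Y → L, p.1 A ≤ B ↔ A ≤ p.2 B) ∧
  (((id, id) : OpPair L Y) ∈ S) ∧
  (∀ p ∈ S, ∀ q ∈ S, ((p.1 ∘ q.1, q.2 ∘ p.2) : OpPair L Y) ∈ S)

/-- M ⊨^S A ⇒ B : for every ⟨f,g⟩ ∈ S, f(A) ⊆ M implies f(B) ⊆ M. -/
def Sat [CompleteResiduatedLattice L] (S : Set (OpPair L Y)) (M : Y → L) (φ : FAI L Y) : Prop :=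
  ∀ p ∈ S, p.1 φ.1 ≤ M → p.1 φ.2 ≤ M

/-- The set Mod^S(Th) of S-models of a theory Th. -/
def ModS [CompleteResiduatedLattice L] (S : Set (OpPair L Y)) (Th : Set (FAI L Y)) :
    Set (Y → L) :=
  {M | ∀ φ ∈ Th, Sat S M φ}

/-- Semantic entailment Th ⊨^S φ, i.e. Mod^S(Th) ⊆ Mod^S({φ}). -/
def Entails [CompleteResiduatedLattice L] (S : Set (OpPair L Y)) (Th : Set (FAI L Y))
    (φ : FAI L Y) : Prop :=
  ModS S Th ⊆ ModS S {φ}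

/-- [A]^S_Th : the least S-model of Th containing A (intersection of all such models). -/
def clS [CompleteResiduatedLattice L] (S : Set (OpPair L Y)) (Th : Set (FAI L Y))
    (A : Y → L) : Y → L :=
  sInf {M | M ∈ ModS S Th ∧ A ≤ M}

/-- S-closure operator on L^Y. -/
def IsSClosureOp [CompleteResiduatedLattice L] (S : Set (OpPair L Y))
    (c : (Y → L) → (Y → L)) : Prop :=
  (∀ A, A ≤ c A) ∧ (∀ A B, A ≤ B → c A ≤ c B) ∧
  (∀ p ∈ S, ∀ A, c (p.2 (c A)) ≤ p.2 (c A))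

/-- S-closure system in ⟨L^Y, ⊆⟩. -/
def IsSClosureSys [CompleteResiduatedLattice L] (S : Set (OpPair L Y))
    (𝒮 : Set (Y → L)) : Prop :=
  (∀ T ⊆ 𝒮, sInf T ∈ 𝒮) ∧ (∀ p ∈ S, ∀ M ∈ 𝒮, p.2 M ∈ 𝒮)

/-- c_𝒮(A) = ⋂{B ∈ 𝒮 : A ⊆ B}. -/
def clSys [CompleteResiduatedLattice L] (𝒮 : Set (Y → L)) (A : Y → L) : Y → L :=
  sInf {B | B ∈ 𝒮 ∧ A ≤ B}

/-- I ⊨^S A ⇒ B for an L-context ⟨X,Y,I⟩ (with I curried, I x = I_x). -/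
def CtxSat [CompleteResiduatedLattice L] (S : Set (OpPair L Y)) (I : X → Y → L)
    (φ : FAI L Y) : Prop :=
  ∀ x, Sat S (I x) φ

/-- S_g : the set of upper adjoints occurring in S. -/
def Sg [CompleteResiduatedLattice L] (S : Set (OpPair L Y)) : Set ((Y → L) → (Y → L)) :=
  {g | ∃ f, (f, g) ∈ S}

/-- F^↑ = ⋂{g(I_x) : ⟨x,g⟩ ∈ F}. -/
def upOp [CompleteResiduatedLattice L] (I : X → Y → L)
    (F : Set (X × ((Y → L) → (Y → L)))) : Y → L :=
  ⨅ xg ∈ F, xg.2 (I xg.1)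

/-- G^↓ = {⟨x,g⟩ ∈ X × S_g : G ⊆ g(I_x)}. -/
def downOp [CompleteResiduatedLattice L] (S : Set (OpPair L Y)) (I : X → Y → L)
    (G : Y → L) : Set (X × ((Y → L) → (Y → L))) :=
  {xg | xg.2 ∈ Sg S ∧ G ≤ xg.2 (I xg.1)}

/-- G^{↓↑} = ⋂{g(I_x) : x ∈ X, ⟨f,g⟩ ∈ S, G ⊆ g(I_x)}. -/
def dnup [CompleteResiduatedLattice L] (S : Set (OpPair L Y)) (I : X → Y → L)
    (G : Y → L) : Y → L :=
  upOp I (downOp S I G)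

/-- Σ is S-complete in ⟨X,Y,I⟩. -/
def SComplete [CompleteResiduatedLattice L] (S : Set (OpPair L Y)) (Th : Set (FAI L Y))
    (I : X → Y → L) : Prop :=
  ∀ A B : Y → L, Entails S Th (A, B) ↔ CtxSat S I (A, B)

/-- Σ is an S-base of ⟨X,Y,I⟩. -/
def SBase [CompleteResiduatedLattice L] (S : Set (OpPair L Y)) (Th : Set (FAI L Y))
    (I : X → Y → L) : Prop :=
  SComplete S Th I ∧ ∀ Th' ⊂ Th, ¬ SComplete S Th' I

/-- S-provability: axioms A∪B ⇒ A, assumptions from Th, rule (Cut) and rule (F). -/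
inductive ProvS [CompleteResiduatedLattice L] (S : Set (OpPair L Y)) (Th : Set (FAI L Y)) :
    FAI L Y → Prop
  | ax (A B : Y → L) : ProvS S Th (A ⊔ B, A)
  | hyp {φ : FAI L Y} (h : φ ∈ Th) : ProvS S Th φ
  | cut {A B C D : Y → L} : ProvS S Th (A, B) → ProvS S Th (B ⊔ C, D) → ProvS S Th (A ⊔ C, D)
  | mul {A B : Y → L} {p : OpPair L Y} (hp : p ∈ S) : ProvS S Th (A, B) → ProvS S Th (p.1 A, p.1 B)

/-- Provability using the axioms and (Cut) as the only inference rule. -/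
inductive ProvCut [CompleteResiduatedLattice L] (Th : Set (FAI L Y)) : FAI L Y → Prop
  | ax (A B : Y → L) : ProvCut Th (A ⊔ B, A)
  | hyp {φ : FAI L Y} (h : φ ∈ Th) : ProvCut Th φ
  | cut {A B C D : Y → L} : ProvCut Th (A, B) → ProvCut Th (B ⊔ C, D) → ProvCut Th (A ⊔ C, D)

/-- Residuum a → b = ⋁{c : a ⊗ c ≤ b}. -/
def resid [CompleteResiduatedLattice L] (a b : L) : L := sSup {c | a * c ≤ b}

/-- Subsethood degree S(A,B) = ⋀_{y∈Y} (A(y) → B(y)). -/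
def subDeg [CompleteResiduatedLattice L] (A B : Y → L) : L := ⨅ y, resid (A y) (B y)

/-- c ⊗ B, pointwise. -/
def scMul [CompleteResiduatedLattice L] (c : L) (B : Y → L) : Y → L := fun y => c * B y

/-- ||A ⇒ B||^S_M = ⋁{c ∈ L : M ⊨^S A ⇒ c ⊗ B}. -/
def truthDeg [CompleteResiduatedLattice L] (S : Set (OpPair L Y)) (M A B : Y → L) : L :=
  sSup {c | Sat S M (A, scMul c B)}

/-- ||A ⇒ B||^S_Th = ⋀_{M ∈ Mod^S(Th)} ||A ⇒ B||^S_M. -/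
def entDeg [CompleteResiduatedLattice L] (S : Set (OpPair L Y)) (Th : Set (FAI L Y))
    (A B : Y → L) : L :=
  ⨅ M ∈ ModS S Th, truthDeg S M A B

/-- Immediate consequence operator t^S_Th. -/
def tOp [CompleteResiduatedLattice L] (S : Set (OpPair L Y)) (Th : Set (FAI L Y))
    (M : Y → L) : Y → L :=
  M ⊔ sSup {N | ∃ φ ∈ Th, ∃ p ∈ S, p.1 φ.1 ≤ M ∧ N = p.1 φ.2}

/-- S-pseudo-intents, defined by well-founded recursion on ⊊ (L^Y is finite). -/
noncomputable def IsPseudoIntent [CompleteResiduatedLattice L] [Finite L] [Finite Y]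
    (dn : (Y → L) → (Y → L)) : (Y → L) → Prop :=
  (wellFounded_lt (α := Y → L)).fix
    (fun P rec => P < dn P ∧ ∀ Q, ∀ h : Q < P, rec Q h → dn Q ≤ P)


/-!
Only the models of a theory matter: entailment, S-completeness and closures are all determined by
`Mod^S`. Removing `φ` from `Σ` keeps the models exactly when `Σ \ {φ}` entails `φ`, which gives
(1) ⇔ (2). Since every model of `Σ` is closed under the upper adjoints of `S`, entailment of
`A ⇒ B` amounts to `B ⊆ [A]^S_Σ`, which turns (2) into the strict inclusion (3).
-/

open Set

section

variable {L Y X : Type*} [CompleteResiduatedLattice L] {S : Set (OpPair L Y)}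
  {Th Th' : Set (FAI L Y)} {φ : FAI L Y} {A B M : Y → L}

lemma modS_anti (h : Th' ⊆ Th) : ModS S Th ⊆ ModS S Th' :=
  fun _ hM ψ hψ => hM ψ (h hψ)

lemma Entails.mono (h : Th' ⊆ Th) (hφ : Entails S Th' φ) : Entails S Th φ :=
  (modS_anti h).trans hφ

lemma entails_of_mem (hφ : φ ∈ Th) : Entails S Th φ := by
  rintro M hM ψ rfl
  exact hM ψ hφ

lemma modS_sdiff_singleton_of_entails (h : Entails S (Th \ {φ}) φ) :
    ModS S (Th \ {φ}) = ModS S Th := by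
  refine (modS_anti sdiff_subset).antisymm' fun M hM ψ hψ => ?_
  by_cases hψφ : ψ = φ
  · exact h hM ψ hψφ
  · exact hM ψ ⟨hψ, hψφ⟩

lemma clS_congr (h : ModS S Th' = ModS S Th) : clS S Th' A = clS S Th A := by
  simp only [clS, h]

lemma SComplete.of_modS_eq {I : X → Y → L} (hTh : SComplete S Th I)
    (h : ModS S Th' = ModS S Th) : SComplete S Th' I :=
  fun A B => by simpa only [Entails, h] using hTh A B

lemma SComplete.entails_iff {I : X → Y → L} (hTh : SComplete S Th I)
    (hTh' : SComplete S Th' I) : Entails S Th φ ↔ Entails S Th' φ :=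
  (hTh φ.1 φ.2).trans (hTh' φ.1 φ.2).symm

lemma clS_mem_modS : clS S Th A ∈ ModS S Th := fun ψ hψ p hp hle =>
  le_sInf fun _ hN => hN.1 ψ hψ p hp (hle.trans (sInf_le hN))

lemma le_clS : A ≤ clS S Th A :=
  le_sInf fun _ hN => hN.2

lemma clS_mono (h : Th' ⊆ Th) : clS S Th' A ≤ clS S Th A :=
  sInf_le_sInf fun _ hN => ⟨modS_anti h hN.1, hN.2⟩

lemma IsParam.gc (hS : IsParam S) {p : OpPair L Y} (hp : p ∈ S) : GaloisConnection p.1 p.2 :=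
  hS.1 p hp

lemma IsParam.snd_mem_modS (hS : IsParam S) {p : OpPair L Y} (hp : p ∈ S)
    (hM : M ∈ ModS S Th) : p.2 M ∈ ModS S Th := fun ψ hψ q hq hle =>
  (hS.gc hp).le_iff_le.1 <| hM ψ hψ _ (hS.2.2 p hp q hq) ((hS.gc hp).le_iff_le.2 hle)

lemma IsParam.entails_iff_le_clS (hS : IsParam S) : Entails S Th (A, B) ↔ B ≤ clS S Th A := by
  refine ⟨fun h => h clS_mem_modS (A, B) rfl (id, id) hS.2.1 le_clS, ?_⟩
  rintro hB M hM _ rfl p hp hA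
  have hcl : clS S Th A ≤ p.2 M :=
    sInf_le ⟨hS.snd_mem_modS hp hM, (hS.gc hp).le_iff_le.1 hA⟩
  exact (hS.gc hp).le_iff_le.2 (hB.trans hcl)

lemma IsParam.entails_sdiff_singleton_iff (hS : IsParam S) (hφ : φ ∈ Th) :
    Entails S (Th \ {φ}) φ ↔ clS S Th φ.1 ≤ clS S (Th \ {φ}) φ.1 := by
  refine ⟨fun h => (clS_congr (modS_sdiff_singleton_of_entails h)).ge, fun h => ?_⟩
  have hφ₂ : φ.2 ≤ clS S Th φ.1 := hS.entails_iff_le_clS.1 (entails_of_mem hφ)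
  exact hS.entails_iff_le_clS.2 (hφ₂.trans h)

end

theorem sBase_tfae_general
    {L Y X : Type*} [CompleteResiduatedLattice L]
    (S : Set (OpPair L Y)) (hS : IsParam S) (I : X → Y → L)
    (Th : Set (FAI L Y)) (hTh : SComplete S Th I) :
    [SBase S Th I,
     ∀ φ ∈ Th, ¬ Entails S (Th \ {φ}) φ,
     ∀ φ ∈ Th, clS S (Th \ {φ}) φ.1 < clS S Th φ.1].TFAE := by
  tfae_have 1 → 2 := fun ⟨_, hmin⟩ φ hφ hent =>
    hmin _ (sdiff_singleton_ssubset.2 hφ) (hTh.of_modS_eq (modS_sdiff_singleton_of_entails hent))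
  tfae_have 2 → 1 := by
    refine fun h2 => ⟨hTh, fun Th' hTh' hcomp => ?_⟩
    obtain ⟨φ, hφ, hφ'⟩ := exists_of_ssubset hTh'
    have hent' : Entails S Th' φ := (hTh.entails_iff hcomp).1 (entails_of_mem hφ)
    exact h2 φ hφ (hent'.mono (subset_sdiff_singleton hTh'.subset hφ'))
  tfae_have 2 ↔ 3 := forall₂_congr fun φ hφ => by
    rw [hS.entails_sdiff_singleton_iff hφ, lt_iff_le_not_ge, and_iff_right (clS_mono sdiff_subset)]
  tfae_finish

/-- characterization of S-bases among S-complete sets. -/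
theorem sBase_tfae
    {L Y X : Type*} [CompleteResiduatedLattice L] [Nonempty Y] [Nonempty X]
    (S : Set (OpPair L Y)) (hS : IsParam S) (I : X → Y → L)
    (Th : Set (FAI L Y)) (hTh : SComplete S Th I) :
    [SBase S Th I,
     ∀ φ ∈ Th, ¬ Entails S (Th \ {φ}) φ,
     ∀ φ ∈ Th, clS S (Th \ {φ}) φ.1 < clS S Th φ.1].TFAE :=
  sBase_tfae_general S hS I Th hTh

end FAIparam
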